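/- Let Ω ⊂ ℝ^N be a bounded open set, Y = [0,1]^N, p ∈ (1,∞), u_ε a sequence in L^p(Ω) and u_0 ∈ L^p(Ω×Y) such that u_ε two-scale converges weakly to u_0. Then u_ε converges weakly in L^p(Ω) to the function u defined by u(x) = ∫_Y u_0(x,y) dy, and the sequence u_ε is bounded in L^p(Ω), i.e. sup_ε ‖u_ε‖_{L^p(Ω)} < ∞. -/

import Mathlib

open MeasureTheory Filter Topology Set
open scoped Classical

noncomputable section

/-- The unit cell `Y = [0,1]^N`. -/
def cube (N : ℕ) : Set (Fin N → ℝ) := {y | ∀ i, 0 ≤ y i ∧ y i ≤ 1}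

/-- The cell `k + εY`. -/
def cellOf {N : ℕ} (ε : ℝ) (k : Fin N → ℤ) : Set (Fin N → ℝ) :=
  {x | ∀ i, ε * (k i : ℝ) ≤ x i ∧ x i ≤ ε * (k i : ℝ) + ε}

/-- The indices of cells entirely contained in the closure of `Ω`. -/
def goodCells {N : ℕ} (ε : ℝ) (Ω : Set (Fin N → ℝ)) : Set (Fin N → ℤ) :=
  {k | cellOf ε k ⊆ closure Ω}

/-- `Ω̃_ε`, the interior of the union of the cells contained in `closure Ω`. -/
def tildeOmega {N : ℕ} (ε : ℝ) (Ω : Set (Fin N → ℝ)) : Set (Fin N → ℝ) :=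
  interior (⋃ k ∈ goodCells ε Ω, cellOf ε k)

/-- The unfolding operator `T_ε`. -/
def unfoldOp {N : ℕ} (ε : ℝ) (Ω : Set (Fin N → ℝ)) (φ : (Fin N → ℝ) → ℝ) :
    (Fin N → ℝ) × (Fin N → ℝ) → ℝ := fun z =>
  if z.1 ∈ tildeOmega ε Ω then φ (fun i => ε * (⌊z.1 i / ε⌋ : ℝ) + ε * z.2 i) else φ z.1

/-- Weak two-scale convergence over the macroscopic domain `U`, with test functions
in `L^q(U; C_#(Y))`. -/
def TwoScaleCvgW {N : ℕ} (q : ℝ) (ε : ℕ → ℝ) (U : Set (Fin N → ℝ))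
    (u : ℕ → (Fin N → ℝ) → ℝ) (u0 : (Fin N → ℝ) → (Fin N → ℝ) → ℝ) : Prop :=
  ∀ φ : (Fin N → ℝ) → (Fin N → ℝ) → ℝ,
    (∀ y, AEMeasurable (fun x => φ x y) (volume.restrict U)) →
    (∀ x, Continuous (φ x)) →
    (∀ x (y : Fin N → ℝ) (k : Fin N → ℤ), φ x (y + fun i => (k i : ℝ)) = φ x y) →
    MemLp (fun x => sSup ((fun y => |φ x y|) '' cube N)) (ENNReal.ofReal q)
      (volume.restrict U) →
    Tendsto (fun n => ∫ x in U, u n x * φ x ((ε n)⁻¹ • x)) atTop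
      (𝓝 (∫ x in U, ∫ y in cube N, u0 x y * φ x y))

/-- Strong two-scale convergence in `L^p` over the macroscopic domain `U`. -/
def TwoScaleCvgS {N : ℕ} (p q : ℝ) (ε : ℕ → ℝ) (U : Set (Fin N → ℝ))
    (u : ℕ → (Fin N → ℝ) → ℝ) (u0 : (Fin N → ℝ) → (Fin N → ℝ) → ℝ) : Prop :=
  TwoScaleCvgW q ε U u u0 ∧
    Tendsto (fun n => eLpNorm (u n) (ENNReal.ofReal p) (volume.restrict U)) atTop
      (𝓝 (eLpNorm (fun z : (Fin N → ℝ) × (Fin N → ℝ) => u0 z.1 z.2) (ENNReal.ofReal p)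
        ((volume.restrict U).prod (volume.restrict (cube N)))))

/-- Smooth admissible test functions: smooth, compactly supported in `x` within `Ω`,
`Y`-periodic in `y`. -/
def SmoothTest {N : ℕ} (Ω : Set (Fin N → ℝ)) (φ : (Fin N → ℝ) → (Fin N → ℝ) → ℝ) : Prop :=
  ContDiff ℝ (⊤ : ℕ∞) (fun z : (Fin N → ℝ) × (Fin N → ℝ) => φ z.1 z.2) ∧
  (∃ K : Set (Fin N → ℝ), IsCompact K ∧ K ⊆ Ω ∧ ∀ x ∉ K, ∀ y, φ x y = 0) ∧
  ∀ x (y : Fin N → ℝ) (k : Fin N → ℤ), φ x (y + fun i => (k i : ℝ)) = φ x y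

/-- Distributional two-scale convergence. -/
def TwoScaleCvgD {N : ℕ} (ε : ℕ → ℝ) (Ω : Set (Fin N → ℝ))
    (u : ℕ → (Fin N → ℝ) → ℝ) (u0 : (Fin N → ℝ) → (Fin N → ℝ) → ℝ) : Prop :=
  ∀ φ : (Fin N → ℝ) → (Fin N → ℝ) → ℝ, SmoothTest Ω φ →
    Tendsto (fun n => ∫ x in Ω, u n x * φ x ((ε n)⁻¹ • x)) atTop
      (𝓝 (∫ x in Ω, ∫ y in cube N, u0 x y * φ x y))

/-!
Testing the two-scale convergence against functions `φ(x, y) = g(x)` that do not depend on the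
fast variable gives the weak `L^p` limit. The functionals `g ↦ ∫ u_ε g` on `L^q` are then
pointwise bounded, hence uniformly bounded by Banach–Steinhaus, and the duality
`‖f‖_p = sup_{‖g‖_q ≤ 1} ∫ f g` turns this into a bound on `‖u_ε‖_p`.
-/

theorem abs_abs_rpow_sub_two_mul_self {p : ℝ} (hp : p ≠ 1) (t : ℝ) :
    |(|t| ^ (p - 2) * t)| = |t| ^ (p - 1) := by
  rcases eq_or_ne t 0 with rfl | ht
  · simp [Real.zero_rpow (sub_ne_zero.mpr hp)]
  · rw [abs_mul, abs_of_nonneg (by positivity), ← Real.rpow_add_one (abs_ne_zero.mpr ht)]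
    ring_nf

theorem mul_abs_rpow_sub_two_mul_self {p : ℝ} (hp : p ≠ 0) (t : ℝ) :
    t * (|t| ^ (p - 2) * t) = |t| ^ p := by
  rcases eq_or_ne t 0 with rfl | ht
  · simp [Real.zero_rpow hp]
  · have h := Real.rpow_add (abs_pos.mpr ht) (p - 2) 2
    rw [sub_add_cancel, Real.rpow_two, sq_abs] at h
    rw [h]
    ring

section Duality

variable {α : Type*} [MeasurableSpace α] {μ : Measure α} {p q : ℝ}

theorem eLpNorm_le_of_forall_integral_mul_le (hpq : p.HolderConjugate q) {f : α → ℝ}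
    (hf : MemLp f (ENNReal.ofReal p) μ) {C : ℝ}
    (hC : ∀ g : α → ℝ, MemLp g (ENNReal.ofReal q) μ →
      ∫ x, f x * g x ∂μ ≤ C * (eLpNorm g (ENNReal.ofReal q) μ).toReal) :
    eLpNorm f (ENNReal.ofReal p) μ ≤ ENNReal.ofReal C := by
  have hp := hpq.lt
  -- the extremal test function of the duality `(L^p)' = L^q`
  set g : α → ℝ := fun x => |f x| ^ (p - 2) * f x
  set a := (eLpNorm f (ENNReal.ofReal p) μ).toReal with ha_def
  have hg_eLpNorm : eLpNorm g (ENNReal.ofReal q) μ = eLpNorm f (ENNReal.ofReal p) μ ^ (p - 1) := by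
    have hnorm : (fun x => ‖g x‖) = fun x => ‖f x‖ ^ (p - 1) := by
      funext x
      exact abs_abs_rpow_sub_two_mul_self hp.ne' (f x)
    rw [← eLpNorm_norm, hnorm, eLpNorm_norm_rpow f (by linarith),
      ← ENNReal.ofReal_mul hpq.symm.nonneg, mul_comm, hpq.sub_one_mul_conj]
  have hg : MemLp g (ENNReal.ofReal q) μ := by
    refine ⟨((hf.1.norm.aemeasurable.pow_const _).mul hf.1.aemeasurable).aestronglyMeasurable, ?_⟩
    rw [hg_eLpNorm]
    exact ENNReal.rpow_lt_top_of_nonneg (by linarith) hf.2.ne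
  have hfg : ∫ x, f x * g x ∂μ = a ^ p := by
    have ha : a = (∫ x, ‖f x‖ ^ p ∂μ) ^ p⁻¹ := by
      rw [ha_def, hf.eLpNorm_eq_integral_rpow_norm (by simpa using hpq.pos) ENNReal.ofReal_ne_top,
        ENNReal.toReal_ofReal hpq.nonneg, ENNReal.toReal_ofReal (by positivity)]
    rw [ha, Real.rpow_inv_rpow (integral_nonneg fun _ => by positivity) hpq.ne_zero]
    exact integral_congr_ae (.of_forall fun x => mul_abs_rpow_sub_two_mul_self hpq.ne_zero (f x))
  have hsplit : a ^ p = a * a ^ (p - 1) := by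
    rw [← Real.rpow_one_add' ENNReal.toReal_nonneg (by linarith), add_sub_cancel]
  have key : a * a ^ (p - 1) ≤ C * a ^ (p - 1) := by
    have := hC g hg
    rwa [hfg, hg_eLpNorm, ← ENNReal.toReal_rpow, hsplit] at this
  rw [← ENNReal.ofReal_toReal hf.2.ne]
  rcases ENNReal.toReal_nonneg.eq_or_lt with ha | ha
  · rw [← ha, ENNReal.ofReal_zero]
    exact bot_le
  · exact ENNReal.ofReal_le_ofReal (le_of_mul_le_mul_right key (by positivity))

theorem exists_eLpNorm_le_of_forall_bounded_integral_mul (hpq : p.HolderConjugate q) {ι : Type*}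
    {u : ι → α → ℝ} (hu : ∀ i, MemLp (u i) (ENNReal.ofReal p) μ)
    (hbdd : ∀ g : α → ℝ, MemLp g (ENNReal.ofReal q) μ → ∃ C, ∀ i, |∫ x, u i x * g x ∂μ| ≤ C) :
    ∃ C : ENNReal, C < ⊤ ∧ ∀ i, eLpNorm (u i) (ENNReal.ofReal p) μ ≤ C := by
  have := hpq.ennrealOfReal
  have : Fact (1 ≤ ENNReal.ofReal p) := ⟨ENNReal.one_le_ofReal.mpr hpq.lt.le⟩
  have : Fact (1 ≤ ENNReal.ofReal q) := ⟨ENNReal.one_le_ofReal.mpr hpq.symm.lt.le⟩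
  let T i := (ContinuousLinearMap.mul ℝ ℝ).lpPairing μ (ENNReal.ofReal p) (ENNReal.ofReal q)
    ((hu i).toLp (u i))
  have hT : ∀ i (g : α → ℝ) (hg : MemLp g (ENNReal.ofReal q) μ),
      T i (hg.toLp g) = ∫ x, u i x * g x ∂μ := by
    intro i g hg
    rw [show T i (hg.toLp g) = _ from ContinuousLinearMap.lpPairing_eq_integral _ _ _]
    refine integral_congr_ae ?_
    filter_upwards [(hu i).coeFn_toLp, hg.coeFn_toLp] with x hux hgx
    simp [hux, hgx]
  obtain ⟨C, hC⟩ := banach_steinhaus (g := T) fun g => by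
    simpa [← hT _ _ (Lp.memLp g), Lp.toLp_coeFn] using hbdd g (Lp.memLp g)
  refine ⟨ENNReal.ofReal C, ENNReal.ofReal_lt_top, fun i =>
    eLpNorm_le_of_forall_integral_mul_le hpq (hu i) fun g hg => ?_⟩
  calc ∫ x, u i x * g x ∂μ = T i (hg.toLp g) := (hT i g hg).symm
    _ ≤ ‖T i‖ * ‖hg.toLp g‖ := (le_abs_self _).trans ((T i).le_opNorm _)
    _ ≤ C * (eLpNorm g (ENNReal.ofReal q) μ).toReal := by
      rw [Lp.norm_toLp]
      gcongr
      exact hC i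

end Duality

theorem TwoScaleCvgW.tendsto_integral_mul {N : ℕ} {q : ℝ} {ε : ℕ → ℝ} {U : Set (Fin N → ℝ)}
    {u : ℕ → (Fin N → ℝ) → ℝ} {u0 : (Fin N → ℝ) → (Fin N → ℝ) → ℝ}
    (h : TwoScaleCvgW q ε U u u0) {g : (Fin N → ℝ) → ℝ}
    (hg : MemLp g (ENNReal.ofReal q) (volume.restrict U)) :
    Tendsto (fun n => ∫ x in U, u n x * g x) atTop
      (𝓝 (∫ x in U, (∫ y in cube N, u0 x y) * g x)) := by
  have hsSup : ∀ x, sSup ((fun _ : Fin N → ℝ => |g x|) '' cube N) = |g x| := fun x => by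
    rw [Set.Nonempty.image_const ⟨0, fun _ => ⟨le_rfl, zero_le_one⟩⟩, csSup_singleton]
  simpa only [integral_mul_const] using h (fun x _ => g x) (fun _ => hg.1.aemeasurable)
    (fun _ => continuous_const) (fun _ _ _ => rfl) (by simp only [hsSup]; exact hg.abs)

theorem stmt5_general {N : ℕ} (Ω : Set (Fin N → ℝ)) (ε : ℕ → ℝ)
    (p q : ℝ) (hp : 1 < p) (hpq : 1/p + 1/q = 1)
    (u : ℕ → (Fin N → ℝ) → ℝ) (hu : ∀ n, MemLp (u n) (ENNReal.ofReal p) (volume.restrict Ω))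
    (u0 : (Fin N → ℝ) → (Fin N → ℝ) → ℝ)
    (hcvg : TwoScaleCvgW q ε Ω u u0) :
    (∀ g : (Fin N → ℝ) → ℝ, MemLp g (ENNReal.ofReal q) (volume.restrict Ω) →
      Tendsto (fun n => ∫ x in Ω, u n x * g x) atTop
        (𝓝 (∫ x in Ω, (∫ y in cube N, u0 x y) * g x))) ∧
    ∃ C : ENNReal, C < ⊤ ∧ ∀ n, eLpNorm (u n) (ENNReal.ofReal p) (volume.restrict Ω) ≤ C := by
  have hconj : p.HolderConjugate q :=
    Real.holderConjugate_iff.mpr ⟨hp, by simpa only [one_div] using hpq⟩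
  refine ⟨fun g hg => hcvg.tendsto_integral_mul hg,
    exists_eLpNorm_le_of_forall_bounded_integral_mul hconj hu fun g hg => ?_⟩
  obtain ⟨C, hC⟩ := (hcvg.tendsto_integral_mul hg).abs.bddAbove_range
  exact ⟨C, fun n => hC (mem_range_self n)⟩

/-- A weakly two-scale convergent sequence converges weakly in `L^p(Ω)`
to the `Y`-average of the two-scale limit and is bounded in `L^p(Ω)`. -/
theorem stmt5 {N : ℕ} (Ω : Set (Fin N → ℝ)) (hΩo : IsOpen Ω)
    (hΩb : Bornology.IsBounded Ω)
    (ε : ℕ → ℝ) (hεpos : ∀ n, 0 < ε n) (hε0 : Tendsto ε atTop (𝓝 0))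
    (p q : ℝ) (hp : 1 < p) (hpq : 1/p + 1/q = 1)
    (u : ℕ → (Fin N → ℝ) → ℝ) (hu : ∀ n, MemLp (u n) (ENNReal.ofReal p) (volume.restrict Ω))
    (u0 : (Fin N → ℝ) → (Fin N → ℝ) → ℝ)
    (hu0 : MemLp (fun z : (Fin N → ℝ) × (Fin N → ℝ) => u0 z.1 z.2) (ENNReal.ofReal p) ((volume.restrict Ω).prod (volume.restrict (cube N))))
    (hcvg : TwoScaleCvgW q ε Ω u u0) :
    (∀ g : (Fin N → ℝ) → ℝ, MemLp g (ENNReal.ofReal q) (volume.restrict Ω) →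
      Tendsto (fun n => ∫ x in Ω, u n x * g x) atTop
        (𝓝 (∫ x in Ω, (∫ y in cube N, u0 x y) * g x))) ∧
    ∃ C : ENNReal, C < ⊤ ∧ ∀ n, eLpNorm (u n) (ENNReal.ofReal p) (volume.restrict Ω) ≤ C :=
  stmt5_general Ω ε p q hp hpq u hu u0 hcvg

end
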